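/- Let α ≥ 0. For every finitely supported real sequence (u_n)_{n≥0} with u_0 = 0, we have ∑_{n≥1} n^α (u_n − u_{n-1})² ≥ ((α−1)²/4) ∑_{n≥1} n^{α−2} u_n². -/

import Mathlib

/-!
Ground-state argument. For `r > 0` one has `(x - y)² ≥ (1 - r) x² - (r⁻¹ - 1) y²`, the difference
being `(r x - y)² / r`. Used on every edge `n → n + 1` with weight `(n + 1)^α` and a ratio `r_n`, the
negative terms telescope, so the inequality follows once the ratios satisfy a local condition.
Good ratios are rational approximations of `φ(M - 1) / φ(M)` for the continuous
ground state `φ(M) = M^((1 - α)/2)`. Bernoulli's inequality replaces `(1 + 1/M)^α` by a polynomial in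
`1/M`, turning the condition into a rational inequality; the direction of Bernoulli's inequality and
the sign of `r(M + 1)⁻¹ - 1` split `α` into the ranges `[0, 1]`, `[1, 2]` and `[2, ∞)`.
-/

open Finset Real

lemma one_sub_mul_sq_sub_inv_sub_one_mul_sq_le {r : ℝ} (hr : 0 < r) (x y : ℝ) :
    (1 - r) * x ^ 2 - (r⁻¹ - 1) * y ^ 2 ≤ (x - y) ^ 2 := by
  have hid : (x - y) ^ 2 - ((1 - r) * x ^ 2 - (r⁻¹ - 1) * y ^ 2) = (r * x - y) ^ 2 / r := by
    field_simp
    ring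
  linarith [div_nonneg (sq_nonneg (r * x - y)) hr.le]

theorem sum_mul_sq_le_sum_mul_sq_sub {a w r u : ℕ → ℝ} (ha : ∀ n, 0 ≤ a n) (hr : ∀ n, 0 < r n)
    (hw : ∀ n, w n ≤ a n * (1 - r n) - a (n + 1) * ((r (n + 1))⁻¹ - 1))
    {N : ℕ} (h0 : u 0 = 0) (hN : u N = 0) :
    ∑ n ∈ range N, w n * u (n + 1) ^ 2 ≤ ∑ n ∈ range N, a n * (u (n + 1) - u n) ^ 2 := by
  set g : ℕ → ℝ := fun n => a n * ((r n)⁻¹ - 1) * u n ^ 2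
  have hterm (n : ℕ) : w n * u (n + 1) ^ 2 + (g (n + 1) - g n) ≤ a n * (u (n + 1) - u n) ^ 2 := by
    have := one_sub_mul_sq_sub_inv_sub_one_mul_sq_le (hr n) (u (n + 1)) (u n)
    nlinarith [mul_le_mul_of_nonneg_left this (ha n),
      mul_le_mul_of_nonneg_right (hw n) (sq_nonneg (u (n + 1)))]
  have hsum := sum_le_sum fun n (_ : n ∈ range N) => hterm n
  rwa [sum_add_distrib, sum_range_sub g, show g N = 0 by simp [g, hN],
    show g 0 = 0 by simp [g, h0], sub_zero, add_zero] at hsum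

lemma hardyRatio_condition_of_bound {α c M ρ ρ' B : ℝ} (hM : 0 < M)
    (hB : (1 + M⁻¹) ^ α * (ρ'⁻¹ - 1) ≤ B * (ρ'⁻¹ - 1))
    (hkey : c / M ^ 2 ≤ (1 - ρ) - B * (ρ'⁻¹ - 1)) :
    c * M ^ (α - 2) ≤ M ^ α * (1 - ρ) - (M + 1) ^ α * (ρ'⁻¹ - 1) := by
  have hMα : 0 ≤ M ^ α := (rpow_pos_of_pos hM α).le
  have hsplit : (M + 1) ^ α = M ^ α * (1 + M⁻¹) ^ α := by
    rw [← mul_rpow hM.le (by positivity), mul_add, mul_inv_cancel₀ hM.ne', mul_one]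
  rw [hsplit, rpow_sub hM, rpow_two]
  have := mul_le_mul_of_nonneg_left hB hMα
  have := mul_le_mul_of_nonneg_left hkey hMα
  calc c * (M ^ α / M ^ 2) = M ^ α * (c / M ^ 2) := by ring
    _ ≤ _ := by linarith

/-- With `M = n + 1`, this is the hypothesis of `sum_mul_sq_le_sum_mul_sq_sub` for the weights
`a n = (n + 1)^α`, `w n = c (n + 1)^(α - 2)` and ratios `r (n + 1)`. -/
def IsHardyRatio (α c : ℝ) (r : ℝ → ℝ) : Prop :=
  ∀ M, 1 ≤ M → 0 < r M ∧ c * M ^ (α - 2) ≤ M ^ α * (1 - r M) - (M + 1) ^ α * ((r (M + 1))⁻¹ - 1)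

lemma isHardyRatio_of_le_one {α : ℝ} (hα₀ : 0 ≤ α) (hα₁ : α ≤ 1) :
    IsHardyRatio α ((α - 1) ^ 2 / 4)
      fun M => (4 * M ^ 2 - 2 * (1 - α) * M - 1) / (4 * M ^ 2) := by
  have hnum (M : ℝ) (hM : 1 ≤ M) : 0 < 4 * M ^ 2 - 2 * (1 - α) * M - 1 := by nlinarith
  intro M hM
  have hM' : 1 ≤ M + 1 := by linarith
  have hρ' : 0 ≤ ((4 * (M + 1) ^ 2 - 2 * (1 - α) * (M + 1) - 1) / (4 * (M + 1) ^ 2))⁻¹ - 1 := by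
    rw [sub_nonneg, one_le_inv₀ (div_pos (hnum _ hM') (by positivity)), div_le_one (by positivity)]
    nlinarith
  refine ⟨div_pos (hnum M hM) (by positivity),
    hardyRatio_condition_of_bound (B := 1 + α * M⁻¹) (by positivity) ?_ ?_⟩
  · exact mul_le_mul_of_nonneg_right
      (rpow_one_add_le_one_add_mul_self (by linarith [inv_pos.2 (by linarith : 0 < M)]) hα₀ hα₁) hρ'
  · have hQ := hnum _ hM'
    have hid : (1 - (4 * M ^ 2 - 2 * (1 - α) * M - 1) / (4 * M ^ 2)) -
        (1 + α * M⁻¹) * (((4 * (M + 1) ^ 2 - 2 * (1 - α) * (M + 1) - 1) / (4 * (M + 1) ^ 2))⁻¹ - 1)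
          - (α - 1) ^ 2 / 4 / M ^ 2
        = (2 * (2 - (1 - α) ^ 2 * (1 + α)) * M + α * (1 + 2 * α) * (2 - α))
            / (4 * M ^ 2 * (4 * (M + 1) ^ 2 - 2 * (1 - α) * (M + 1) - 1)) := by
      have : M ≠ 0 := by positivity
      have : (M + 1) * (4 * (M + 1) - 2 * (1 - α)) - 1 ≠ 0 := by nlinarith
      field_simp
      ring
    have : 0 ≤ (2 * (2 - (1 - α) ^ 2 * (1 + α)) * M + α * (1 + 2 * α) * (2 - α))
            / (4 * M ^ 2 * (4 * (M + 1) ^ 2 - 2 * (1 - α) * (M + 1) - 1)) := by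
      have : 1 ≤ 2 - (1 - α) ^ 2 * (1 + α) := by nlinarith [sq_nonneg (1 - α), sq_nonneg α]
      apply div_nonneg _ (mul_nonneg (by positivity) hQ.le)
      nlinarith [mul_nonneg (mul_nonneg hα₀ (by linarith : 0 ≤ 1 + 2 * α)) (by linarith : 0 ≤ 2 - α)]
    linarith

lemma isHardyRatio_of_one_le_of_le_two {α : ℝ} (hα₁ : 1 ≤ α) (hα₂ : α ≤ 2) :
    IsHardyRatio α ((α - 1) ^ 2 / 4)
      fun M => (2 * M ^ 2 + (α - 1) * (M - 1)) / (2 * M ^ 2) := by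
  have hnum (M : ℝ) (hM : 1 ≤ M) : 0 < 2 * M ^ 2 + (α - 1) * (M - 1) := by nlinarith
  intro M hM
  have hM' : 1 ≤ M + 1 := by linarith
  have hρ' : ((2 * (M + 1) ^ 2 + (α - 1) * (M + 1 - 1)) / (2 * (M + 1) ^ 2))⁻¹ - 1 ≤ 0 := by
    rw [sub_nonpos, inv_le_one₀ (div_pos (hnum _ hM') (by positivity)), one_le_div (by positivity)]
    nlinarith
  refine ⟨div_pos (hnum M hM) (by positivity),
    hardyRatio_condition_of_bound (B := 1 + α * M⁻¹) (by positivity) ?_ ?_⟩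
  · exact mul_le_mul_of_nonpos_right
      (one_add_mul_self_le_rpow_one_add (by linarith [inv_pos.2 (by linarith : 0 < M)]) hα₁) hρ'
  · have hid : (1 - (2 * M ^ 2 + (α - 1) * (M - 1)) / (2 * M ^ 2)) -
        (1 + α * M⁻¹) * (((2 * (M + 1) ^ 2 + (α - 1) * (M + 1 - 1)) / (2 * (M + 1) ^ 2))⁻¹ - 1)
          - (α - 1) ^ 2 / 4 / M ^ 2
        = (α - 1) * ((5 - α ^ 2) * M + 2 * (3 - α))
            / (4 * M ^ 2 * (2 * (M + 1) ^ 2 + (α - 1) * M)) := by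
      have : M ≠ 0 := by positivity
      have : 2 * (M + 1) ^ 2 + (α - 1) * (M + 1 - 1) ≠ 0 := (hnum _ hM').ne'
      field_simp
      rw [eq_div_iff (by nlinarith)]
      ring
    have : 0 ≤ (α - 1) * ((5 - α ^ 2) * M + 2 * (3 - α))
            / (4 * M ^ 2 * (2 * (M + 1) ^ 2 + (α - 1) * M)) := by
      have : 0 ≤ (2 - α) * (2 + α) * M := by
        apply mul_nonneg (mul_nonneg _ _) _ <;> linarith
      exact div_nonneg (mul_nonneg (by linarith) (by nlinarith))
        (mul_nonneg (by positivity) (by nlinarith))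
    linarith

lemma isHardyRatio_of_two_le {α : ℝ} (hα : 2 ≤ α) :
    IsHardyRatio α ((α - 1) ^ 2 / 4) fun M => (2 * M + α - 1) / (2 * M) := by
  intro M hM
  have hM₀ : 0 < M := by linarith
  have hρ' : ((2 * (M + 1) + α - 1) / (2 * (M + 1)))⁻¹ - 1 ≤ 0 := by
    rw [sub_nonpos, inv_le_one₀ (div_pos (by linarith) (by positivity)), one_le_div (by positivity)]
    linarith
  have hbernoulli : (1 + α / 2 * M⁻¹) ^ 2 ≤ (1 + M⁻¹) ^ α := by
    have hs : -1 ≤ M⁻¹ := by linarith [inv_nonneg.2 hM₀.le]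
    calc (1 + α / 2 * M⁻¹) ^ 2 ≤ ((1 + M⁻¹) ^ (α / 2)) ^ 2 :=
          pow_le_pow_left₀ (by positivity) (one_add_mul_self_le_rpow_one_add hs (by linarith)) 2
      _ = (1 + M⁻¹) ^ α := by
          rw [← rpow_mul_natCast (by positivity)]; norm_num
  refine ⟨div_pos (by linarith) (by positivity),
    hardyRatio_condition_of_bound (B := (1 + α / 2 * M⁻¹) ^ 2) hM₀ ?_ ?_⟩
  · exact mul_le_mul_of_nonpos_right hbernoulli hρ'
  · have hid : (1 - (2 * M + α - 1) / (2 * M)) -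
        (1 + α / 2 * M⁻¹) ^ 2 * (((2 * (M + 1) + α - 1) / (2 * (M + 1)))⁻¹ - 1)
          - (α - 1) ^ 2 / 4 / M ^ 2
        = (α - 1) / (4 * M ^ 2 * (2 * M + α + 1)) := by
      have : 2 * (M + 1) + α - 1 ≠ 0 := by linarith
      field_simp
      ring
    have : 0 ≤ (α - 1) / (4 * M ^ 2 * (2 * M + α + 1)) :=
      div_nonneg (by linarith) (by positivity)
    linarith

lemma exists_isHardyRatio {α : ℝ} (hα : 0 ≤ α) : ∃ r, IsHardyRatio α ((α - 1) ^ 2 / 4) r := by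
  rcases le_total α 1 with h₁ | h₁
  · exact ⟨_, isHardyRatio_of_le_one hα h₁⟩
  rcases le_total α 2 with h₂ | h₂
  · exact ⟨_, isHardyRatio_of_one_le_of_le_two h₁ h₂⟩
  · exact ⟨_, isHardyRatio_of_two_le h₂⟩

lemma tsum_eq_sum_range_of_forall_ge {M : Type*} [AddCommMonoid M] [TopologicalSpace M]
    {f : ℕ → M} {N : ℕ} (hf : ∀ n ≥ N, f n = 0) : ∑' n, f n = ∑ n ∈ range N, f n :=
  tsum_eq_sum fun n hn => hf n (by simpa using hn)

theorem hardy_weighted_nonneg (α : ℝ) (hα : 0 ≤ α) (u : ℕ → ℝ)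
    (hfin : ∃ N, ∀ n ≥ N, u n = 0) (h0 : u 0 = 0) :
    ∑' n : ℕ, ((n : ℝ) + 1) ^ α * (u (n + 1) - u n) ^ 2 ≥
      ((α - 1) ^ 2 / 4) * ∑' n : ℕ, ((n : ℝ) + 1) ^ (α - 2) * (u (n + 1)) ^ 2 := by
  obtain ⟨N, hN⟩ := hfin
  obtain ⟨r, hr⟩ := exists_isHardyRatio hα
  have hone (n : ℕ) : (1 : ℝ) ≤ n + 1 := le_add_of_nonneg_left n.cast_nonneg
  have hsum := sum_mul_sq_le_sum_mul_sq_sub (u := u) (a := fun n => ((n : ℝ) + 1) ^ α)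
    (w := fun n => (α - 1) ^ 2 / 4 * ((n : ℝ) + 1) ^ (α - 2)) (r := fun n => r (n + 1))
    (fun n => by positivity) (fun n => (hr _ (hone n)).1)
    (fun n => by simpa using (hr _ (hone n)).2) h0 (hN N le_rfl)
  have hvanish (n : ℕ) (hn : n ≥ N) : u (n + 1) = 0 := hN (n + 1) (by omega)
  rw [tsum_eq_sum_range_of_forall_ge fun n hn => by simp [hvanish n hn, hN n hn],
    tsum_eq_sum_range_of_forall_ge fun n hn => by simp [hvanish n hn], mul_sum]
  simpa only [mul_assoc] using hsum
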